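/- arXiv:1307.0032 — 4 statements merged into one kernel-verified Lean document; each statement's English description precedes it below -/
import Mathlib

section
/- If a sequence (δ_τ) of reals in [0,1) satisfies δ_{τ+1} ≤ γ²δ_τ / (1 - δ_τ + γ²δ_τ) for all τ ≥ 0, where 0 < γ < 1, then for all τ ≥ 0, δ_{τ+1} ≤ γ^{2τ+2} δ_0 / (1 - (1 - γ^{2τ+2}) δ_0). -/
/-!
In terms of the odds `x / (1 - x)`, the map `x ↦ a x / (1 - x + a x)` is multiplication by `a`.
The recursion therefore says that the odds of `δ τ` decay at least geometrically with ratio `γ²`,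
and translating the bound `γ^(2τ+2)` times the odds of `δ 0` back through the same map gives the claim.
-/

/-- Junk value `odds 1 = 0`; all lemmas below assume `x < 1`. -/
noncomputable def odds (x : ℝ) : ℝ := x / (1 - x)

lemma odds_le_odds_iff {x y : ℝ} (hx : x < 1) (hy : y < 1) : odds x ≤ odds y ↔ x ≤ y := by
  unfold odds
  rw [div_le_div_iff₀ (sub_pos.2 hx) (sub_pos.2 hy)]
  have : x * (1 - y) - y * (1 - x) = x - y := by ring
  constructor <;> intro h <;> linarith

lemma mobius_denom_pos {a x : ℝ} (ha : 0 ≤ a) (hx0 : 0 ≤ x) (hx1 : x < 1) :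
    0 < 1 - x + a * x := by
  nlinarith

lemma mobius_lt_one {a x : ℝ} (ha : 0 ≤ a) (hx0 : 0 ≤ x) (hx1 : x < 1) :
    a * x / (1 - x + a * x) < 1 := by
  rw [div_lt_one (mobius_denom_pos ha hx0 hx1)]
  linarith

lemma odds_mobius {a x : ℝ} (ha : 0 ≤ a) (hx0 : 0 ≤ x) (hx1 : x < 1) :
    odds (a * x / (1 - x + a * x)) = a * odds x := by
  unfold odds
  rw [one_sub_div (mobius_denom_pos ha hx0 hx1).ne',
    div_div_div_cancel_right₀ (mobius_denom_pos ha hx0 hx1).ne',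
    show 1 - x + a * x - a * x = 1 - x by ring, mul_div_assoc]

theorem stmt_0_general (δ : ℕ → ℝ) (γ : ℝ)
    (hδ : ∀ τ, 0 ≤ δ τ ∧ δ τ < 1)
    (hrec : ∀ τ, δ (τ + 1) ≤ γ ^ 2 * δ τ / (1 - δ τ + γ ^ 2 * δ τ)) :
    ∀ τ, δ (τ + 1) ≤ γ ^ (2 * τ + 2) * δ 0 / (1 - (1 - γ ^ (2 * τ + 2)) * δ 0) := by
  intro τ
  have hstep (k : ℕ) : odds (δ (k + 1)) ≤ γ ^ 2 * odds (δ k) := by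
    obtain ⟨h0, h1⟩ := hδ k
    rw [← odds_mobius (sq_nonneg γ) h0 h1]
    exact (odds_le_odds_iff (hδ _).2 (mobius_lt_one (sq_nonneg γ) h0 h1)).2 (hrec k)
  have hdecay := le_geom (u := fun k => odds (δ k)) (sq_nonneg γ) (τ + 1)
    fun k _ => hstep k
  set b := γ ^ (2 * τ + 2)
  have hb : (γ ^ 2) ^ (τ + 1) = b := by ring
  have hb0 : 0 ≤ b := hb ▸ pow_nonneg (sq_nonneg γ) _
  obtain ⟨h0, h1⟩ := hδ 0
  rw [hb, ← odds_mobius hb0 h0 h1] at hdecay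
  rw [show 1 - (1 - b) * δ 0 = 1 - δ 0 + b * δ 0 by ring]
  exact (odds_le_odds_iff (hδ _).2 (mobius_lt_one hb0 h0 h1)).1 hdecay

theorem stmt_0 (δ : ℕ → ℝ) (γ : ℝ) (hγ0 : 0 < γ) (hγ1 : γ < 1)
    (hδ : ∀ τ, 0 ≤ δ τ ∧ δ τ < 1)
    (hrec : ∀ τ, δ (τ + 1) ≤ γ ^ 2 * δ τ / (1 - δ τ + γ ^ 2 * δ τ)) :
    ∀ τ, δ (τ + 1) ≤ γ ^ (2 * τ + 2) * δ 0 / (1 - (1 - γ ^ (2 * τ + 2)) * δ 0) :=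
  stmt_0_general δ γ hδ hrec
end

section
/- Let u be a unit vector in ℝ^p and let q = √(1-δ)·u + √δ·g where g is a unit vector orthogonal to u and δ ∈ [0,1]. If s ∈ ℝ^p satisfies ⟨u, s⟩ ≥ (1-δ)^{1/2}·a and |⟨g', s⟩| ≤ b for the unit vector g' orthogonal to u in the plane spanned by u and s (with a > 0), then for q' = s/‖s‖ the squared orthogonal component δ' = ⟨g', q'⟩² satisfies δ' ≤ b² / ((1-δ)a² + b²). -/
open Matrix

/-- Euclidean norm of a vector in ℝ^n. -/
noncomputable def nrm {n : ℕ} (v : Fin n → ℝ) : ℝ := Real.sqrt (∑ i, v i ^ 2)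

/-- Euclidean inner product. -/
noncomputable def ip {n : ℕ} (u v : Fin n → ℝ) : ℝ := ∑ i, u i * v i

/-- Spectral (ℓ₂ operator) norm of a matrix: sup of ‖A v‖ over unit vectors v. -/
noncomputable def specNorm {m n : ℕ} (A : Matrix (Fin m) (Fin n) ℝ) : ℝ :=
  sSup {c | ∃ v : Fin n → ℝ, nrm v = 1 ∧ c = nrm (A.mulVec v)}

/-- Smallest singular value of a matrix: inf of ‖A v‖ over unit vectors v. -/
noncomputable def minSing {m n : ℕ} (A : Matrix (Fin m) (Fin n) ℝ) : ℝ :=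
  sInf {c | ∃ v : Fin n → ℝ, nrm v = 1 ∧ c = nrm (A.mulVec v)}

theorem stmt_2 (p : ℕ) (hp : 2 ≤ p) (u g g' : Fin p → ℝ)
    (hu : nrm u = 1) (hg : nrm g = 1) (hg' : nrm g' = 1)
    (hug : ip u g = 0) (hug' : ip u g' = 0)
    (δ a b : ℝ) (hδ0 : 0 ≤ δ) (hδ1 : δ < 1) (ha : 0 < a) (hb : 0 ≤ b)
    (q : Fin p → ℝ)
    (hq : q = fun i => Real.sqrt (1 - δ) * u i + Real.sqrt δ * g i)
    (s : Fin p → ℝ) (hs0 : s ≠ 0)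
    (hspan : ∃ α β : ℝ, s = fun i => α * u i + β * g' i)
    (hus : ip u s ≥ Real.sqrt (1 - δ) * a)
    (hgs : |ip g' s| ≤ b) :
    (ip g' (fun i => s i / nrm s)) ^ 2 ≤ b ^ 2 / ((1 - δ) * a ^ 2 + b ^ 2) := by
  obtain ⟨α, β, hsab⟩ := hspan
  -- basic sums
  have hu2 : (∑ i, u i ^ 2) = 1 := by
    have := hu
    unfold nrm at this
    nlinarith [Real.sq_sqrt (Finset.sum_nonneg (fun i _ => sq_nonneg (u i)) : (0:ℝ) ≤ ∑ i, u i ^ 2)]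
  have hg'2 : (∑ i, g' i ^ 2) = 1 := by
    have := hg'
    unfold nrm at this
    nlinarith [Real.sq_sqrt (Finset.sum_nonneg (fun i _ => sq_nonneg (g' i)) : (0:ℝ) ≤ ∑ i, g' i ^ 2)]
  have hug'0 : (∑ i, u i * g' i) = 0 := hug'
  have hips : ip u s = α := by
    unfold ip
    rw [hsab]
    have : ∀ i, u i * (α * u i + β * g' i) = α * u i ^ 2 + β * (u i * g' i) := by
      intro i; ring
    simp only [this, Finset.sum_add_distrib, ← Finset.mul_sum, hu2, hug'0]
    ring
  have hipg : ip g' s = β := by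
    unfold ip
    rw [hsab]
    have : ∀ i, g' i * (α * u i + β * g' i) = α * (u i * g' i) + β * g' i ^ 2 := by
      intro i; ring
    simp only [this, Finset.sum_add_distrib, ← Finset.mul_sum, hg'2, hug'0]
    ring
  have hα : Real.sqrt (1 - δ) * a ≤ α := by rw [← hips]; exact hus
  have hβ : |β| ≤ b := by rw [← hipg]; exact hgs
  have h1δ : (0:ℝ) < 1 - δ := by linarith
  have hsq : Real.sqrt (1 - δ) * a > 0 := mul_pos (Real.sqrt_pos.mpr h1δ) ha
  have hα0 : 0 < α := lt_of_lt_of_le hsq hα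
  have hα2 : (1 - δ) * a ^ 2 ≤ α ^ 2 := by
    nlinarith [Real.sq_sqrt h1δ.le, hsq]
  have hβ2 : β ^ 2 ≤ b ^ 2 := by nlinarith [abs_nonneg β, sq_abs β]
  -- norm of s
  have hns2 : (∑ i, s i ^ 2) = α ^ 2 + β ^ 2 := by
    rw [hsab]
    have : ∀ i, (α * u i + β * g' i) ^ 2 =
        α ^ 2 * u i ^ 2 + β ^ 2 * g' i ^ 2 + (2 * α * β) * (u i * g' i) := by
      intro i; ring
    simp only [this, Finset.sum_add_distrib, ← Finset.mul_sum, hu2, hg'2, hug'0]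
    ring
  have hden : (0:ℝ) < α ^ 2 + β ^ 2 := by positivity
  have hnrms : nrm s = Real.sqrt (α ^ 2 + β ^ 2) := by unfold nrm; rw [hns2]
  have hnrmpos : 0 < nrm s := by rw [hnrms]; exact Real.sqrt_pos.mpr hden
  have hipdiv : ip g' (fun i => s i / nrm s) = β / nrm s := by
    unfold ip
    rw [← hipg]
    unfold ip
    rw [Finset.sum_div]
    exact Finset.sum_congr rfl fun i _ => by field_simp
  rw [hipdiv, div_pow, hnrms, Real.sq_sqrt hden.le]
  have hdb : (0:ℝ) < (1 - δ) * a ^ 2 + b ^ 2 := by positivity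
  rw [div_le_div_iff₀ hden hdb]
  nlinarith [sq_nonneg β, sq_nonneg b]
end

section
/- Let Q R = F Q₀ be a QR-decomposition where Q, Q₀ ∈ ℝ^{p×k} have orthonormal columns, R ∈ ℝ^{k×k} is invertible, and F ∈ ℝ^{p×p}. Let U ∈ ℝ^{p×k} have orthonormal columns with complement U_⊥. Then for v₁ a top right-singular unit vector of U_⊥ᵀQ and ṽ₁ = R^{-1}v₁/‖R^{-1}v₁‖, one has ‖U_⊥ᵀ Q‖₂² = ‖U_⊥ᵀ F Q₀ ṽ₁‖² / (‖Uᵀ F Q₀ ṽ₁‖² + ‖U_⊥ᵀ F Q₀ ṽ₁‖²). -/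
open Matrix

lemma nrm_sq {n : ℕ} (v : Fin n → ℝ) : nrm v ^ 2 = ∑ i, v i ^ 2 := by
  unfold nrm
  exact Real.sq_sqrt (Finset.sum_nonneg fun i _ => sq_nonneg _)

lemma nrm_sq_eq_dot {n : ℕ} (v : Fin n → ℝ) : nrm v ^ 2 = v ⬝ᵥ v := by
  rw [nrm_sq]; simp [dotProduct, sq]

lemma nrm_smul {n : ℕ} (a : ℝ) (v : Fin n → ℝ) : nrm (a • v) = |a| * nrm v := by
  unfold nrm
  rw [← Real.sqrt_sq_eq_abs, ← Real.sqrt_mul (sq_nonneg a), Finset.mul_sum]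
  congr 1
  refine Finset.sum_congr rfl fun i _ => ?_
  simp [mul_pow, Pi.smul_apply, smul_eq_mul]

lemma nrm_eq_zero {n : ℕ} {v : Fin n → ℝ} (h : nrm v = 0) : v = 0 := by
  unfold nrm at h
  have h2 : ∑ i, v i ^ 2 = 0 :=
    (Real.sqrt_eq_zero (Finset.sum_nonneg fun i _ => sq_nonneg _)).mp h
  funext i
  have := (Finset.sum_eq_zero_iff_of_nonneg (fun i _ => sq_nonneg (v i))).mp h2 i (Finset.mem_univ i)
  exact pow_eq_zero_iff (by norm_num) |>.mp this

lemma dot_trans {m n : ℕ} (A : Matrix (Fin m) (Fin n) ℝ) (x : Fin m → ℝ) :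
    (Aᵀ.mulVec x) ⬝ᵥ (Aᵀ.mulVec x) = x ⬝ᵥ (A * Aᵀ).mulVec x := by
  rw [← mulVec_mulVec, dotProduct_mulVec x A, ← mulVec_transpose]

theorem stmt_8 (p k : ℕ) (hk : 1 ≤ k) (hkp : k ≤ p)
    (Q Q₀ U : Matrix (Fin p) (Fin k) ℝ) (Uperp : Matrix (Fin p) (Fin (p - k)) ℝ)
    (R : Matrix (Fin k) (Fin k) ℝ) (F : Matrix (Fin p) (Fin p) ℝ)
    (hQ : Qᵀ * Q = 1) (hQ₀ : Q₀ᵀ * Q₀ = 1) (hU : Uᵀ * U = 1)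
    (hUperp : Uperpᵀ * Uperp = 1) (hUorth : Uᵀ * Uperp = 0)
    (hcomplete : U * Uᵀ + Uperp * Uperpᵀ = 1)
    (hR : IsUnit R) (hRtri : R.BlockTriangular (id : Fin k → Fin k))
    (hQR : Q * R = F * Q₀)
    (v₁ : Fin k → ℝ) (hv₁ : nrm v₁ = 1)
    (hv₁top : nrm ((Uperpᵀ * Q).mulVec v₁) = specNorm (Uperpᵀ * Q))
    (tv : Fin k → ℝ)
    (htv : tv = fun i => (R⁻¹.mulVec v₁) i / nrm (R⁻¹.mulVec v₁)) :
    specNorm (Uperpᵀ * Q) ^ 2 =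
      nrm ((Uperpᵀ * F * Q₀).mulVec tv) ^ 2 /
        (nrm ((Uᵀ * F * Q₀).mulVec tv) ^ 2 + nrm ((Uperpᵀ * F * Q₀).mulVec tv) ^ 2) := by
  have hRdet : IsUnit R.det := (Matrix.isUnit_iff_isUnit_det R).mp hR
  set w : Fin k → ℝ := R⁻¹.mulVec v₁ with hw
  set c : ℝ := nrm w with hc
  -- c ≠ 0
  have hRw : R.mulVec w = v₁ := by
    rw [hw, mulVec_mulVec, Matrix.mul_nonsing_inv R hRdet, one_mulVec]
  have hcne : c ≠ 0 := by
    intro h0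
    have : w = 0 := nrm_eq_zero h0
    rw [this] at hRw
    simp [mulVec_zero] at hRw
    rw [← hRw] at hv₁
    simp [nrm] at hv₁
  -- tv = c⁻¹ • w
  have htv2 : tv = c⁻¹ • w := by
    rw [htv]; funext i; simp [Pi.smul_apply, smul_eq_mul, div_eq_inv_mul]
  -- F Q₀ tv related to Q v₁
  have hRtv : R.mulVec tv = c⁻¹ • v₁ := by
    rw [htv2, mulVec_smul, hRw]
  have key : ∀ (m : ℕ) (M : Matrix (Fin p) (Fin m) ℝ),
      (Mᵀ * F * Q₀).mulVec tv = c⁻¹ • (Mᵀ * Q).mulVec v₁ := by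
    intro m M
    have : Mᵀ * F * Q₀ = Mᵀ * (Q * R) := by rw [hQR, Matrix.mul_assoc]
    rw [this, ← mulVec_mulVec, ← mulVec_mulVec, hRtv, mulVec_smul, mulVec_smul, mulVec_mulVec]
  have keyU := key k U
  have keyUp := key (p - k) Uperp
  -- Pythagoras: ‖Uᵀ Q v₁‖² + ‖U⊥ᵀ Q v₁‖² = 1
  have pyth : nrm ((Uᵀ * Q).mulVec v₁) ^ 2 + nrm ((Uperpᵀ * Q).mulVec v₁) ^ 2 = 1 := by
    set x : Fin p → ℝ := Q.mulVec v₁ with hx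
    have h1 : (Uᵀ * Q).mulVec v₁ = Uᵀ.mulVec x := by rw [hx, mulVec_mulVec]
    have h2 : (Uperpᵀ * Q).mulVec v₁ = Uperpᵀ.mulVec x := by rw [hx, mulVec_mulVec]
    rw [h1, h2, nrm_sq_eq_dot, nrm_sq_eq_dot, dot_trans, dot_trans,
      ← dotProduct_add, ← add_mulVec, hcomplete, one_mulVec]
    have hd := dot_trans Qᵀ v₁
    rw [transpose_transpose, hQ, one_mulVec] at hd
    rw [hx, hd, ← nrm_sq_eq_dot, hv₁]
    norm_num
  -- rewrite everything
  rw [keyU, keyUp, nrm_smul, nrm_smul, ← hv₁top]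
  have hcabs : |c⁻¹| ≠ 0 := by simp [hcne]
  have h2 : (|c⁻¹| * nrm ((Uᵀ * Q).mulVec v₁)) ^ 2
      + (|c⁻¹| * nrm ((Uperpᵀ * Q).mulVec v₁)) ^ 2 = |c⁻¹| ^ 2 := by
    rw [mul_pow, mul_pow, ← mul_add, pyth, mul_one]
  rw [h2, mul_pow, mul_comm, mul_div_assoc, div_self (pow_ne_zero 2 hcabs), mul_one]
end

section
/- Suppose nonnegative reals a, b, c, d satisfy: a ≤ σ²·d + e and b ≥ (λ² + σ² - λ²ε/4)·√(1 - d²), where d = ‖U_⊥ᵀQ_τ‖₂ ∈ [0,1), e = λ²ε/2, σ ≥ 0, 0 < λ ≤ 1, 0 < ε ≤ d². If the new error satisfies d'² ≤ a²/(b² + a²), then d'² ≤ γ² d² / (1 - d² + γ² d²) with γ = (σ² + λ²/2)/(σ² + 3λ²/4). -/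
lemma stmt_9_aux (K1 K2 s d : ℝ) (hK1 : 0 < K1) (hK2 : 0 < K2) (hs0 : 0 < s)
    (hs : s ^ 2 = 1 - d ^ 2) :
    (K1 * d) ^ 2 / ((K2 * s) ^ 2 + (K1 * d) ^ 2)
      = (K1 / K2) ^ 2 * d ^ 2 / (1 - d ^ 2 + (K1 / K2) ^ 2 * d ^ 2) := by
  rw [← hs]
  have h1 : (K2 * s) ^ 2 + (K1 * d) ^ 2 ≠ 0 := by positivity
  have h2 : s ^ 2 + (K1 / K2) ^ 2 * d ^ 2 ≠ 0 := by positivity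
  field_simp

lemma stmt_9_key (a b A B : ℝ) (ha0 : 0 ≤ a) (hA0 : 0 ≤ A) (hA : a ≤ A) (hB : B ≤ b)
    (hBpos : 0 < B) :
    a ^ 2 / (b ^ 2 + a ^ 2) ≤ A ^ 2 / (B ^ 2 + A ^ 2) := by
  have hden1 : 0 < b ^ 2 + a ^ 2 := by nlinarith
  have hden2 : 0 < B ^ 2 + A ^ 2 := by nlinarith
  rw [div_le_div_iff₀ hden1 hden2]
  have h1 : a * B ≤ A * b := mul_le_mul hA hB hBpos.le hA0
  have h2 : (a * B) ^ 2 ≤ (A * b) ^ 2 :=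
    pow_le_pow_left₀ (mul_nonneg ha0 hBpos.le) h1 2
  nlinarith [h2]

theorem stmt_9 (σ lam ε d e a b d' : ℝ)
    (hσ : 0 ≤ σ) (hlam0 : 0 < lam) (hlam1 : lam ≤ 1)
    (hd0 : 0 ≤ d) (hd1 : d < 1) (hε0 : 0 < ε) (hε : ε ≤ d ^ 2)
    (ha0 : 0 ≤ a) (hb0 : 0 ≤ b) (hd'0 : 0 ≤ d')
    (he : e = lam ^ 2 * ε / 2)
    (ha : a ≤ σ ^ 2 * d + e)
    (hb : b ≥ (lam ^ 2 + σ ^ 2 - lam ^ 2 * ε / 4) * Real.sqrt (1 - d ^ 2))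
    (hd' : d' ^ 2 ≤ a ^ 2 / (b ^ 2 + a ^ 2)) :
    d' ^ 2 ≤ ((σ ^ 2 + lam ^ 2 / 2) / (σ ^ 2 + 3 * lam ^ 2 / 4)) ^ 2 * d ^ 2 /
      (1 - d ^ 2 + ((σ ^ 2 + lam ^ 2 / 2) / (σ ^ 2 + 3 * lam ^ 2 / 4)) ^ 2 * d ^ 2) := by
  have hd2 : d ^ 2 < 1 := by nlinarith
  have hs2 : Real.sqrt (1 - d ^ 2) ^ 2 = 1 - d ^ 2 := Real.sq_sqrt (by linarith)
  have hs0 : 0 < Real.sqrt (1 - d ^ 2) := Real.sqrt_pos.2 (by linarith)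
  generalize hsdef : Real.sqrt (1 - d ^ 2) = s at hb hs2 hs0
  have hK1 : 0 < σ ^ 2 + lam ^ 2 / 2 := by positivity
  have hK2 : 0 < σ ^ 2 + 3 * lam ^ 2 / 4 := by positivity
  have hdd : d ^ 2 ≤ d := by nlinarith
  have haA : a ≤ (σ ^ 2 + lam ^ 2 / 2) * d := by
    have h1 : lam ^ 2 * ε ≤ lam ^ 2 * d ^ 2 :=
      mul_le_mul_of_nonneg_left hε (sq_nonneg lam)
    have h2 : lam ^ 2 * d ^ 2 ≤ lam ^ 2 * d :=
      mul_le_mul_of_nonneg_left hdd (sq_nonneg lam)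
    rw [he] at ha; nlinarith
  have hbB : (σ ^ 2 + 3 * lam ^ 2 / 4) * s ≤ b := by
    have hcoef : σ ^ 2 + 3 * lam ^ 2 / 4 ≤ lam ^ 2 + σ ^ 2 - lam ^ 2 * ε / 4 := by
      have : lam ^ 2 * ε ≤ lam ^ 2 * 1 :=
        mul_le_mul_of_nonneg_left (by linarith) (sq_nonneg lam)
      linarith
    have := mul_le_mul_of_nonneg_right hcoef hs0.le
    linarith
  have key := stmt_9_key a b ((σ ^ 2 + lam ^ 2 / 2) * d) ((σ ^ 2 + 3 * lam ^ 2 / 4) * s)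
    ha0 (by positivity) haA hbB (by positivity)
  rw [← stmt_9_aux (σ ^ 2 + lam ^ 2 / 2) (σ ^ 2 + 3 * lam ^ 2 / 4) s d hK1 hK2 hs0 hs2]
  linarith [hd'.trans key]
end
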